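/- Let X be a measurable space, λ a probability measure on X, K a Markov kernel on X given X with K(·|x) ≪ λ for every x ∈ X, and Δ ⊆ X a measurable set that is absorbing for K. Let η be a probability measure on X with η ≪ λ, and assume ∑_{t=0}^∞ (ηK^t)(Δᶜ) < ∞ and ∑_{t=0}^∞ (λK^t)(Δᶜ) < ∞. Then the measure γ := ∑_{t=0}^∞ (ηK^t)|_{Δᶜ} is a finite nonnegative measure on X, γ ≪ λ, γ satisfies γ = (η + γK)|_{Δᶜ}, and γ is the unique finite nonnegative measure solution of the equation ξ = (η + ξK)|_{Δᶜ} in the variable ξ. -/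

import Mathlib

/-!
Since `Δ` is absorbing, mass in `Δ` never reaches `Δᶜ`, so `((μ|_{Δᶜ}) K)|_{Δᶜ} = (μK)|_{Δᶜ}`.
Applied termwise this shows that `γ` solves `ξ = (η + ξK)|_{Δᶜ}`; applied to a solution `ξ`
and iterated it gives `ξ = ∑_{t<n} (ηK^t)|_{Δᶜ} + (ξK^n)|_{Δᶜ}`. The remainder has mass
`∫ K^n(Δᶜ|x) dξ(x)`. As `∑ₙ ∫ K^n(Δᶜ|x) dλ(x) < ∞`, `K^n(Δᶜ|x) → 0` for `λ`-a.e. `x`, hence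
`ξ`-a.e. because `ξ ≪ λ` follows from the equation, and dominated convergence against the finite
measure `ξ` (with bound `1`) makes the remainder vanish.
-/

open MeasureTheory ProbabilityTheory
open scoped ENNReal

/-- `iterK K μ t` is the measure `μ K^t` obtained by letting a Markov kernel `K` act `t`
times on the measure `μ`. -/
noncomputable def iterK {X : Type*} [MeasurableSpace X] (K : Kernel X X)
    (μ : Measure X) : ℕ → Measure X
  | 0 => μ
  | (t + 1) => (iterK K μ t).bind fun x => K x

open Filter Topology

instance ProbabilityTheory.Kernel.isMarkovKernel_pow {X : Type*} [MeasurableSpace X]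
    (K : Kernel X X) [IsMarkovKernel K] (n : ℕ) : IsMarkovKernel (K ^ n) := by
  induction n with
  | zero => rw [pow_zero]; exact inferInstanceAs (IsMarkovKernel Kernel.id)
  | succ n ih => rw [pow_succ]; exact IsMarkovKernel.comp _ _

lemma MeasureTheory.Measure.eq_sum_of_eq_sum_range_add {X : Type*} [MeasurableSpace X]
    {μ : Measure X} {ν ρ : ℕ → Measure X}
    (h : ∀ n, μ = ∑ t ∈ Finset.range n, ν t + ρ n)
    (hρ : Tendsto (fun n => ρ n Set.univ) atTop (𝓝 0)) :
    μ = Measure.sum ν := by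
  ext s hs
  have hρs : Tendsto (fun n => ρ n s) atTop (𝓝 0) :=
    tendsto_of_tendsto_of_tendsto_of_le_of_le tendsto_const_nhds hρ
      (fun _ => zero_le) (fun _ => measure_mono (Set.subset_univ s))
  have hlim : Tendsto (fun n => (∑ t ∈ Finset.range n, ν t s) + ρ n s) atTop
      (𝓝 (Measure.sum ν s + 0)) := by
    rw [Measure.sum_apply _ hs]
    exact (ENNReal.tendsto_nat_tsum _).add hρs
  have hconst : ∀ n, (∑ t ∈ Finset.range n, ν t s) + ρ n s = μ s := fun n => by
    rw [h n, Measure.add_apply, Measure.finsetSum_apply]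
  simp only [hconst] at hlim
  simpa using tendsto_nhds_unique tendsto_const_nhds hlim

lemma MeasureTheory.Measure.sum_eq_zero_add {X : Type*} [MeasurableSpace X]
    (μ : ℕ → Measure X) : Measure.sum μ = μ 0 + Measure.sum fun n => μ (n + 1) := by
  ext s hs
  simp only [Measure.sum_apply _ hs, Measure.add_apply]
  exact tsum_eq_zero_add' ENNReal.summable

section iterK

variable {X : Type*} [MeasurableSpace X] (K : Kernel X X)

lemma iterK_succ' (μ : Measure X) (n : ℕ) : iterK K μ (n + 1) = iterK K (K ∘ₘ μ) n := by
  induction n with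
  | zero => rfl
  | succ n ih => exact congrArg (fun ν => K ∘ₘ ν) ih

lemma iterK_add (μ ν : Measure X) (n : ℕ) :
    iterK K (μ + ν) n = iterK K μ n + iterK K ν n := by
  induction n with
  | zero => rfl
  | succ n ih => exact (congrArg (fun ν => K ∘ₘ ν) ih).trans Measure.comp_add

lemma iterK_eq_pow_comp (μ : Measure X) (n : ℕ) : iterK K μ n = (K ^ n) ∘ₘ μ := by
  induction n with
  | zero => exact Measure.id_comp.symm
  | succ n ih =>
    rw [pow_succ', iterK, ih]
    exact Measure.comp_assoc

lemma iterK_apply (μ : Measure X) (n : ℕ) {s : Set X} (hs : MeasurableSet s) :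
    iterK K μ n s = ∫⁻ x, (K ^ n) x s ∂μ := by
  rw [iterK_eq_pow_comp, Measure.bind_apply hs (Kernel.aemeasurable _)]

lemma comp_absolutelyContinuous {lam : Measure X} (hac : ∀ x, K x ≪ lam) (μ : Measure X) :
    K ∘ₘ μ ≪ lam :=
  Measure.AbsolutelyContinuous.mk fun s hs hs0 => by
    simp [Measure.bind_apply hs K.aemeasurable, hac _ hs0]

lemma iterK_absolutelyContinuous {lam μ : Measure X} (hac : ∀ x, K x ≪ lam) (hμ : μ ≪ lam) :
    ∀ n, iterK K μ n ≪ lam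
  | 0 => hμ
  | _ + 1 => comp_absolutelyContinuous K hac _

lemma ae_tendsto_pow_apply_zero {lam : Measure X} {s : Set X} (hs : MeasurableSet s)
    (hsum : ∑' n, iterK K lam n s ≠ ∞) :
    ∀ᵐ x ∂lam, Tendsto (fun n => (K ^ n) x s) atTop (𝓝 0) := by
  have hmeas : ∀ n, Measurable fun x => (K ^ n) x s := fun n => Kernel.measurable_coe _ hs
  have hint : ∫⁻ x, ∑' n, (K ^ n) x s ∂lam ≠ ∞ := by
    simpa [lintegral_tsum fun n => (hmeas n).aemeasurable, iterK_apply K lam _ hs] using hsum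
  filter_upwards [ae_lt_top (Measurable.tsum hmeas) hint] with x hx
  exact ENNReal.tendsto_atTop_zero_of_tsum_ne_top hx.ne

lemma tendsto_iterK_apply_zero [IsMarkovKernel K] {lam ξ : Measure X} [IsFiniteMeasure ξ]
    (hξ : ξ ≪ lam) {s : Set X} (hs : MeasurableSet s) (hsum : ∑' n, iterK K lam n s ≠ ∞) :
    Tendsto (fun n => iterK K ξ n s) atTop (𝓝 0) := by
  simp only [iterK_apply K ξ _ hs]
  simpa using tendsto_lintegral_of_dominated_convergence (fun _ => 1)
    (fun _ => Kernel.measurable_coe _ hs) (fun _ => ae_of_all _ fun _ => prob_le_one)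
    (by simp) (hξ.ae_le (ae_tendsto_pow_apply_zero K hs hsum))

variable {K} {Δ : Set X}

lemma restrict_comp_restrict_compl (hΔ : MeasurableSet Δ) (hK : ∀ x ∈ Δ, K x Δᶜ = 0)
    (μ : Measure X) : (K ∘ₘ μ.restrict Δᶜ).restrict Δᶜ = (K ∘ₘ μ).restrict Δᶜ := by
  have hΔ0 : (K ∘ₘ μ.restrict Δ) Δᶜ = 0 := by
    rw [Measure.bind_apply hΔ.compl K.aemeasurable, setLIntegral_eq_zero_iff hΔ
      (Kernel.measurable_coe _ hΔ.compl)]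
    exact ae_of_all _ hK
  conv_rhs => rw [← Measure.restrict_add_restrict_compl (μ := μ) hΔ, Measure.comp_add,
    Measure.restrict_add, Measure.restrict_eq_zero.2 hΔ0, zero_add]

lemma restrict_iterK_restrict_compl (hΔ : MeasurableSet Δ) (hK : ∀ x ∈ Δ, K x Δᶜ = 0)
    (μ : Measure X) (n : ℕ) :
    (iterK K (μ.restrict Δᶜ) n).restrict Δᶜ = (iterK K μ n).restrict Δᶜ := by
  induction n with
  | zero => exact Measure.restrict_restrict_of_subset subset_rfl
  | succ n ih =>
    simp only [iterK]
    rw [← restrict_comp_restrict_compl hΔ hK, ih, restrict_comp_restrict_compl hΔ hK]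

end iterK

noncomputable def occupationMeasure {X : Type*} [MeasurableSpace X] (K : Kernel X X)
    (η : Measure X) (Δ : Set X) : Measure X :=
  Measure.sum fun t => (iterK K η t).restrict Δᶜ

section occupationMeasure

variable {X : Type*} [MeasurableSpace X] {K : Kernel X X} {η : Measure X} {Δ : Set X}

lemma isFiniteMeasure_occupationMeasure (h : ∑' t, iterK K η t Δᶜ < ⊤) :
    IsFiniteMeasure (occupationMeasure K η Δ) where
  measure_univ_lt_top := by
    simpa [occupationMeasure, Measure.sum_apply _ MeasurableSet.univ] using h

lemma occupationMeasure_absolutelyContinuous {lam : Measure X} (hac : ∀ x, K x ≪ lam)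
    (hη : η ≪ lam) : occupationMeasure K η Δ ≪ lam :=
  Measure.absolutelyContinuous_sum_left fun t =>
    (Measure.absolutelyContinuous_of_le Measure.restrict_le_self).trans
      (iterK_absolutelyContinuous K hac hη t)

lemma occupationMeasure_eq (hΔ : MeasurableSet Δ) (hK : ∀ x ∈ Δ, K x Δᶜ = 0) :
    occupationMeasure K η Δ = (η + K ∘ₘ occupationMeasure K η Δ).restrict Δᶜ := by
  have hstep : ∀ t, (K ∘ₘ (iterK K η t).restrict Δᶜ).restrict Δᶜ
      = (iterK K η (t + 1)).restrict Δᶜ := fun t => restrict_comp_restrict_compl hΔ hK _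
  rw [occupationMeasure, Measure.restrict_add, Measure.bind_sum _ _ K.aemeasurable,
    Measure.restrict_sum _ hΔ.compl]
  simp only [hstep]
  exact Measure.sum_eq_zero_add _

lemma eq_sum_range_add_restrict_iterK (hΔ : MeasurableSet Δ) (hK : ∀ x ∈ Δ, K x Δᶜ = 0)
    {ξ : Measure X} (hξ : ξ = (η + K ∘ₘ ξ).restrict Δᶜ) (n : ℕ) :
    ξ = ∑ t ∈ Finset.range n, (iterK K η t).restrict Δᶜ + (iterK K ξ n).restrict Δᶜ := by
  induction n with
  | zero =>
    have hξΔ : ξ.restrict Δᶜ = ξ := by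
      rw [hξ, Measure.restrict_restrict_of_subset subset_rfl]
    rw [Finset.sum_range_zero, zero_add, iterK, hξΔ]
  | succ n ih =>
    have hrem : (iterK K ξ n).restrict Δᶜ
        = (iterK K η n).restrict Δᶜ + (iterK K ξ (n + 1)).restrict Δᶜ := by
      calc (iterK K ξ n).restrict Δᶜ
          = (iterK K ((η + K ∘ₘ ξ).restrict Δᶜ) n).restrict Δᶜ := by rw [← hξ]
        _ = (iterK K (η + K ∘ₘ ξ) n).restrict Δᶜ := restrict_iterK_restrict_compl hΔ hK _ n
        _ = _ := by rw [iterK_add, Measure.restrict_add, iterK_succ']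
    rw [Finset.sum_range_succ, add_assoc, ← hrem]
    exact ih

lemma eq_occupationMeasure [IsMarkovKernel K] {lam ξ : Measure X} [IsFiniteMeasure ξ]
    (hΔ : MeasurableSet Δ) (hK : ∀ x ∈ Δ, K x Δᶜ = 0) (hac : ∀ x, K x ≪ lam)
    (hη : η ≪ lam) (hsum : ∑' t, iterK K lam t Δᶜ ≠ ∞)
    (hξ : ξ = (η + K ∘ₘ ξ).restrict Δᶜ) : ξ = occupationMeasure K η Δ := by
  have hξac : ξ ≪ lam := by
    rw [hξ]
    exact (Measure.absolutelyContinuous_of_le Measure.restrict_le_self).trans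
      (hη.add_left (comp_absolutelyContinuous K hac ξ))
  refine Measure.eq_sum_of_eq_sum_range_add (eq_sum_range_add_restrict_iterK hΔ hK hξ) ?_
  simpa using tendsto_iterK_apply_zero K hξac hΔ.compl hsum

end occupationMeasure

theorem stmt_6_general {X : Type*} [MeasurableSpace X] (lam : Measure X)
    (K : Kernel X X) [IsMarkovKernel K] (hac : ∀ x, K x ≪ lam)
    (Δ : Set X) (hΔ : MeasurableSet Δ) (habs : ∀ x ∈ Δ, K x Δ = 1)
    (η : Measure X) (hη : η ≪ lam)
    (hsum_η : ∑' t, iterK K η t Δᶜ < ⊤)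
    (hsum_lam : ∑' t, iterK K lam t Δᶜ < ⊤) :
    IsFiniteMeasure (Measure.sum fun t => (iterK K η t).restrict Δᶜ) ∧
    (Measure.sum fun t => (iterK K η t).restrict Δᶜ) ≪ lam ∧
    (Measure.sum fun t => (iterK K η t).restrict Δᶜ)
      = (η + (Measure.sum fun t => (iterK K η t).restrict Δᶜ).bind fun x => K x).restrict Δᶜ ∧
    ∀ ξ : Measure X, IsFiniteMeasure ξ →
      ξ = (η + ξ.bind fun x => K x).restrict Δᶜ →
      ξ = Measure.sum fun t => (iterK K η t).restrict Δᶜ := by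
  have hK : ∀ x ∈ Δ, K x Δᶜ = 0 := fun x hx => (prob_compl_eq_zero_iff hΔ).2 (habs x hx)
  exact ⟨isFiniteMeasure_occupationMeasure hsum_η,
    occupationMeasure_absolutelyContinuous hac hη,
    occupationMeasure_eq hΔ hK,
    fun ξ _ hξ => eq_occupationMeasure hΔ hK hac hη hsum_lam.ne hξ⟩

/-- Under the stated absorption and absolute-continuity assumptions, the measure
`γ := ∑ₜ (η K^t)|_{Δᶜ}` is a finite measure, `γ ≪ λ`, it satisfies `γ = (η + γK)|_{Δᶜ}`,
and it is the unique finite measure solution of this fixed-point equation. -/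
theorem stmt_6 {X : Type*} [MeasurableSpace X] (lam : Measure X) [IsProbabilityMeasure lam]
    (K : Kernel X X) [IsMarkovKernel K] (hac : ∀ x, K x ≪ lam)
    (Δ : Set X) (hΔ : MeasurableSet Δ) (habs : ∀ x ∈ Δ, K x Δ = 1)
    (η : Measure X) [IsProbabilityMeasure η] (hη : η ≪ lam)
    (hsum_η : ∑' t, iterK K η t Δᶜ < ⊤)
    (hsum_lam : ∑' t, iterK K lam t Δᶜ < ⊤) :
    IsFiniteMeasure (Measure.sum fun t => (iterK K η t).restrict Δᶜ) ∧
    (Measure.sum fun t => (iterK K η t).restrict Δᶜ) ≪ lam ∧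
    (Measure.sum fun t => (iterK K η t).restrict Δᶜ)
      = (η + (Measure.sum fun t => (iterK K η t).restrict Δᶜ).bind fun x => K x).restrict Δᶜ ∧
    ∀ ξ : Measure X, IsFiniteMeasure ξ →
      ξ = (η + ξ.bind fun x => K x).restrict Δᶜ →
      ξ = Measure.sum fun t => (iterK K η t).restrict Δᶜ :=
  stmt_6_general lam K hac Δ hΔ habs η hη hsum_η hsum_lam
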